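/- Let a, b > 0 in ℤ, let (e₁,...,e_n; f₁,...,f_n) be the Euclidean division chain starting from (a,b) (with f_n = 0), and let (q₁,...,q_k; r₁,...,r_k) be an arbitrary division chain starting from (a,b) with integer quotients. Then for every l ≤ min(k, n/2), we have |r_l| ≥ f_{2l}. -/
import Mathlib

/-- A division chain of length `k` starting from `(a, b)`: `s 0 = a`, `s 1 = b`
(i.e. `r₋₁ = a`, `r₀ = b`), `q i` is the quotient `q_{i+1}`, `s (i+2)` is the remainder
`r_{i+1}`, and `r_{i-1} = q_{i+1} r_i + r_{i+1}` for all `i < k`. The last remainder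
`r_k` is `s (k+1)`. -/
def DivChain {R : Type*} [CommRing R] (a b : R) (k : ℕ) (q s : ℕ → R) : Prop :=
  s 0 = a ∧ s 1 = b ∧ ∀ i < k, s i = q i * s (i + 1) + s (i + 2)

/-- The Euclidean division chain starting from `(a, b)` in `ℤ`: `f 0 = a`, `f 1 = b`
(i.e. `f₋₁ = a`, `f₀ = b`), each next remainder is obtained by Euclidean division,
the remainders are nonzero up to index `n + 1` exclusively, and `f (n + 1) = 0`
(i.e. `f_n = 0`). -/
def EuclidChain (a b : ℤ) (n : ℕ) (f : ℕ → ℤ) : Prop :=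
  f 0 = a ∧ f 1 = b ∧ (∀ i < n, f (i + 2) = f i % f (i + 1)) ∧
    (∀ i ≤ n, f i ≠ 0) ∧ f (n + 1) = 0

/-- Two sequences satisfying the same two-step recurrence with equal seeds agree. -/
lemma chain_eq (u v : ℕ → ℤ) (N : ℕ)
    (h0 : u 0 = v 0) (h1 : u 1 = v 1)
    (hu : ∀ i, i + 2 ≤ N → u (i + 2) = u i % u (i + 1))
    (hv : ∀ i, i + 2 ≤ N → v (i + 2) = v i % v (i + 1)) :
    ∀ j, j ≤ N → u j = v j := by
  intro j
  induction j using Nat.strong_induction_on with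
  | _ j ih =>
    intro hj
    match j with
    | 0 => exact h0
    | 1 => exact h1
    | (i + 2) =>
      rw [hu i hj, hv i hj, ih i (by omega) (by omega), ih (i + 1) (by omega) (by omega)]

lemma ec_pos {a b : ℤ} {n : ℕ} {f : ℕ → ℤ} (ha : 0 < a) (hb : 0 < b)
    (hf : EuclidChain a b n f) : ∀ i ≤ n, 0 < f i := by
  obtain ⟨hf0, hf1, hfrec, hfne, hfz⟩ := hf
  intro i
  induction i using Nat.strong_induction_on with
  | _ i ih =>
    intro hi
    match i with
    | 0 => rw [hf0]; exact ha
    | 1 => rw [hf1]; exact hb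
    | (j + 2) =>
      have h1 : f (j + 2) = f j % f (j + 1) := hfrec j (by omega)
      have h2 : f (j + 1) ≠ 0 := hfne (j + 1) (by omega)
      have h3 : 0 ≤ f (j + 2) := h1 ▸ Int.emod_nonneg _ h2
      exact lt_of_le_of_ne h3 (Ne.symm (hfne (j + 2) hi))

lemma ec_lt {a b : ℤ} {n : ℕ} {f : ℕ → ℤ} (ha : 0 < a) (hb : 0 < b)
    (hf : EuclidChain a b n f) : ∀ i, 1 ≤ i → i ≤ n → f (i + 1) < f i := by
  intro i h1 h2
  obtain ⟨j, rfl⟩ : ∃ j, i = j + 1 := ⟨i - 1, by omega⟩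
  have h3 : f (j + 2) = f j % f (j + 1) := hf.2.2.1 j (by omega)
  have h4 : 0 < f (j + 1) := ec_pos ha hb hf (j + 1) (by omega)
  exact h3 ▸ Int.emod_lt_of_pos _ h4

lemma ec_anti {a b : ℤ} {n : ℕ} {f : ℕ → ℤ} (ha : 0 < a) (hb : 0 < b)
    (hf : EuclidChain a b n f) : ∀ i j, 1 ≤ i → i ≤ j → j ≤ n + 1 → f j ≤ f i := by
  intro i j h1 hij hj
  induction j, hij using Nat.le_induction with
  | base => exact le_refl _
  | succ j hij ih =>
    have h2 : f (j + 1) < f j := ec_lt ha hb hf j (by omega) (by omega)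
    exact le_trans h2.le (ih (by omega))

/-- Construction of the Euclidean chain as a function. -/
def Ech (a b : ℤ) : ℕ → ℤ × ℤ
  | 0 => (a, b)
  | (i + 1) => ((Ech a b i).2, (Ech a b i).1 % (Ech a b i).2)

def Ef (a b : ℤ) (i : ℕ) : ℤ := (Ech a b i).1

lemma Ef_zero (a b : ℤ) : Ef a b 0 = a := rfl
lemma Ef_one (a b : ℤ) : Ef a b 1 = b := rfl
lemma Ef_rec (a b : ℤ) (i : ℕ) : Ef a b (i + 2) = Ef a b i % Ef a b (i + 1) := by
  show (Ech a b (i + 2)).1 = (Ech a b i).1 % (Ech a b (i + 1)).1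
  rw [show Ech a b (i + 2) = ((Ech a b (i+1)).2, (Ech a b (i+1)).1 % (Ech a b (i+1)).2) from rfl,
    show Ech a b (i + 1) = ((Ech a b i).2, (Ech a b i).1 % (Ech a b i).2) from rfl]

lemma euclid_exists (b y : ℤ) (hb : 0 < b) (hy : 0 < y) :
    ∃ m g, EuclidChain b y m g := by
  have key : ∃ i, Ef b y (i + 1) = 0 := by
    have main : ∀ t : ℕ, ∀ j, 0 ≤ Ef b y (j + 1) → Ef b y (j + 1) ≤ (t : ℤ) →
        ∃ i, Ef b y (i + 1) = 0 := by
      intro t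
      induction t with
      | zero => intro j h1 h2; exact ⟨j, le_antisymm h2 h1⟩
      | succ t ih =>
        intro j h1 h2
        by_cases hz : Ef b y (j + 1) = 0
        · exact ⟨j, hz⟩
        · have hpos : 0 < Ef b y (j + 1) := lt_of_le_of_ne h1 (Ne.symm hz)
          have hr : Ef b y (j + 2) = Ef b y j % Ef b y (j + 1) := Ef_rec b y j
          have h3 : 0 ≤ Ef b y (j + 2) := hr ▸ Int.emod_nonneg _ hz
          have h4 : Ef b y (j + 2) < Ef b y (j + 1) := hr ▸ Int.emod_lt_of_pos _ hpos
          have h3' : 0 ≤ Ef b y (j + 1 + 1) := h3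
          have h4' : Ef b y (j + 1 + 1) < Ef b y (j + 1) := h4
          exact ih (j + 1) h3' (by push_cast at h2 ⊢; omega)
    have h0 : Ef b y 1 = y := Ef_one b y
    exact main y.toNat 0 (by rw [h0]; exact hy.le) (by rw [h0, Int.toNat_of_nonneg hy.le])
  classical
  refine ⟨Nat.find key, Ef b y, rfl, rfl, fun i _ => Ef_rec b y i, ?_, Nat.find_spec key⟩
  intro i hi
  match i with
  | 0 => exact hb.ne'
  | (j + 1) => exact Nat.find_min key (by omega)

/-- The key comparison lemma, case `y < b`. -/
lemma lemma_L_small (a b y : ℤ) (ha : 0 < a) (hb : 0 < b) (hy : 0 < y) (hyb : y < b)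
    (hmod : b ∣ y - a ∨ b ∣ y + a)
    {n m : ℕ} {f g : ℕ → ℤ} (hf : EuclidChain a b n f) (hg : EuclidChain b y m g) :
    n ≤ m + 2 ∧ ∀ j, 1 ≤ j → j + 2 ≤ n → f (j + 2) ≤ g j := by
  obtain ⟨hf0, hf1, hfrec, hfne, hfz⟩ := hf
  obtain ⟨hg0, hg1, hgrec, hgne, hgz⟩ := hg
  by_cases hn : n ≤ 2
  · exact ⟨by omega, fun j hj1 hj2 => by omega⟩
  have hn3 : 3 ≤ n := by omega
  have hc2 : f 2 = a % b := by rw [hfrec 0 (by omega), hf0, hf1]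
  have hcpos : 0 < f 2 := ec_pos ha hb ⟨hf0, hf1, hfrec, hfne, hfz⟩ 2 (by omega)
  have hclt : f 2 < b := by
    have := ec_lt ha hb ⟨hf0, hf1, hfrec, hfne, hfz⟩ 1 (by omega) (by omega)
    rwa [hf1] at this
  have hdvdc : b ∣ a - f 2 := by
    refine ⟨a / b, ?_⟩
    have := Int.mul_ediv_add_emod a b
    rw [hc2]; linarith
  -- dichotomy
  have hdich : y = f 2 ∨ y + f 2 = b := by
    rcases hmod with h | h
    · left
      have h2 : b ∣ y - f 2 := by
        have := dvd_add h hdvdc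
        rwa [show y - a + (a - f 2) = y - f 2 by ring] at this
      have h3 : y - f 2 = 0 := Int.eq_zero_of_abs_lt_dvd h2 (abs_lt.mpr ⟨by omega, by omega⟩)
      omega
    · right
      have h2 : b ∣ y + f 2 := by
        have := dvd_sub h hdvdc
        rwa [show y + a - (a - f 2) = y + f 2 by ring] at this
      have h2' : b ∣ y + f 2 - b := dvd_sub h2 dvd_rfl
      have h3 : y + f 2 - b = 0 :=
        Int.eq_zero_of_abs_lt_dvd h2' (abs_lt.mpr ⟨by omega, by omega⟩)
      omega
  rcases eq_or_ne y (f 2) with hyc | hyc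
  · -- Case A : y = f 2, so g j = f (j + 1)
    have key : ∀ j, j ≤ min (m + 1) n → g j = f (j + 1) := by
      refine chain_eq g (fun j => f (j + 1)) (min (m + 1) n)
        (by show g 0 = f 1; rw [hg0, hf1]) (by show g 1 = f 2; rw [hg1, hyc]) ?_ ?_
      · intro i hi; exact hgrec i (by omega)
      · intro i hi; exact hfrec (i + 1) (by omega)
    have hm : n ≤ m + 1 := by
      by_contra hcon
      push_neg at hcon
      have h1 : g (m + 1) = f (m + 1 + 1) := key (m + 1) (by omega)
      exact hfne (m + 2) (by omega) (by rw [show m + 2 = m + 1 + 1 by omega, ← h1, hgz])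
    refine ⟨by omega, fun j hj1 hj2 => ?_⟩
    rw [key j (by omega)]
    exact ec_anti ha hb ⟨hf0, hf1, hfrec, hfne, hfz⟩ (j + 1) (j + 2) (by omega) (by omega)
      (by omega)
  · have hB : y + f 2 = b := by
      rcases hdich with h | h
      · exact absurd h hyc
      · exact h
    have hm1 : 1 ≤ m := by
      by_contra hcon
      have hm0 : m = 0 := by omega
      rw [hm0] at hgz
      have : g 1 = 0 := hgz
      rw [hg1] at this; omega
    rcases lt_or_gt_of_ne hyc with hlt | hgt
    · -- Case B2 : y < f 2, so f 3 = y and g is f shifted by 2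
      have hf3 : f 3 = y := by
        have h5 : f 3 = f 1 % f 2 := hfrec 1 (by omega)
        rw [h5, hf1, show b = y + f 2 * 1 by linarith, Int.add_mul_emod_self_left]
        exact Int.emod_eq_of_lt hy.le hlt
      have hg2 : g 2 = f 4 := by
        have h5 : f 4 = f 2 % f 3 := hfrec 2 (by omega)
        rw [hgrec 0 (by omega), hg0, hg1, h5, hf3,
          show b = f 2 + y * 1 by linarith, Int.add_mul_emod_self_left]
      by_cases hg2z : g 2 = 0
      · have hn4 : n ≤ 3 := by
          by_contra hcon; push_neg at hcon
          exact hfne 4 (by omega) (by rw [← hg2, hg2z])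
        refine ⟨by omega, fun j hj1 hj2 => ?_⟩
        have hj : j = 1 := by omega
        subst hj
        show f 3 ≤ g 1
        rw [hg1, hf3]
      · have hm2 : 2 ≤ m := by
          by_contra hcon
          have hm1' : m = 1 := by omega
          rw [hm1'] at hgz
          exact hg2z hgz
        have hn4 : 4 ≤ n := by
          by_contra hcon; push_neg at hcon
          have h4 : f 4 = 0 := by rw [show (4 : ℕ) = n + 1 by omega]; exact hfz
          exact hg2z (hg2.trans h4)
        have hg3 : g 3 = f 5 := by
          have h5 : f 5 = f 3 % f 4 := by
            have := hfrec 3 (by omega)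
            norm_num at this
            exact this
          rw [hgrec 1 (by omega), hg1, hg2, h5, hf3]
        have key : ∀ j, j ≤ min (m + 1) (n - 1) - 2 → g (j + 2) = f (j + 4) := by
          refine chain_eq (fun j => g (j + 2)) (fun j => f (j + 4)) (min (m + 1) (n - 1) - 2)
            hg2 hg3 ?_ ?_
          · intro i hi; exact hgrec (i + 2) (by omega)
          · intro i hi
            have h6 := hfrec (i + 4) (by omega)
            show f (i + 2 + 4) = f (i + 4) % f (i + 1 + 4)
            rw [show i + 2 + 4 = i + 4 + 2 by omega, show i + 1 + 4 = i + 4 + 1 by omega]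
            exact h6
        have hmn : n ≤ m + 2 := by
          by_contra hcon; push_neg at hcon
          have h1 : g (m - 1 + 2) = f (m - 1 + 4) := key (m - 1) (by omega)
          rw [show m - 1 + 2 = m + 1 by omega, show m - 1 + 4 = m + 3 by omega] at h1
          exact hfne (m + 3) (by omega) (by rw [← h1, hgz])
        refine ⟨hmn, fun j hj1 hj2 => ?_⟩
        rcases Nat.lt_or_ge j 2 with hj | hj
        · have hj' : j = 1 := by omega
          subst hj'
          show f 3 ≤ g 1
          rw [hg1, hf3]
        · have h1 : g (j - 2 + 2) = f (j - 2 + 4) := key (j - 2) (by omega)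
          rw [show j - 2 + 2 = j by omega, show j - 2 + 4 = j + 2 by omega] at h1
          exact le_of_eq h1.symm
    · -- Case B1 : f 2 < y, so g agrees with f from index 2 on
      have hg2 : g 2 = f 2 := by
        rw [hgrec 0 (by omega), hg0, hg1, show b = f 2 + y * 1 by linarith,
          Int.add_mul_emod_self_left]
        exact Int.emod_eq_of_lt hcpos.le hgt
      have hm2 : 2 ≤ m := by
        by_contra hcon
        have hm1' : m = 1 := by omega
        rw [hm1'] at hgz
        have : g 2 = 0 := hgz
        omega
      have hg3 : g 3 = f 3 := by
        have h5 : f 3 = f 1 % f 2 := hfrec 1 (by omega)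
        rw [hgrec 1 (by omega), hg1, hg2, h5, hf1,
          show y = b + f 2 * (-1) by linarith, Int.add_mul_emod_self_left]
      have key : ∀ j, j ≤ min (m + 1) (n + 1) - 2 → g (j + 2) = f (j + 2) := by
        refine chain_eq (fun j => g (j + 2)) (fun j => f (j + 2)) (min (m + 1) (n + 1) - 2)
          hg2 hg3 ?_ ?_
        · intro i hi; exact hgrec (i + 2) (by omega)
        · intro i hi
          have h6 := hfrec (i + 2) (by omega)
          show f (i + 2 + 2) = f (i + 2) % f (i + 1 + 2)
          rw [show i + 1 + 2 = i + 2 + 1 by omega]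
          exact h6
      have hmn : n ≤ m := by
        by_contra hcon; push_neg at hcon
        have h1 : g (m - 1 + 2) = f (m - 1 + 2) := key (m - 1) (by omega)
        rw [show m - 1 + 2 = m + 1 by omega] at h1
        exact hfne (m + 1) (by omega) (by rw [← h1, hgz])
      refine ⟨by omega, fun j hj1 hj2 => ?_⟩
      rcases Nat.lt_or_ge j 2 with hj | hj
      · have hj' : j = 1 := by omega
        subst hj'
        show f 3 ≤ g 1
        have hf32 : f 3 < f 2 := ec_lt ha hb ⟨hf0, hf1, hfrec, hfne, hfz⟩ 2 (by omega) (by omega)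
        rw [hg1]
        linarith
      · have h1 : g (j - 2 + 2) = f (j - 2 + 2) := key (j - 2) (by omega)
        rw [show j - 2 + 2 = j by omega] at h1
        rw [h1]
        exact ec_anti ha hb ⟨hf0, hf1, hfrec, hfne, hfz⟩ j (j + 2) (by omega) (by omega)
          (by omega)

/-- The key comparison lemma: if `y ≡ ±a (mod b)`, the Euclidean chain of `(b, y)`
dominates that of `(a, b)` shifted by two. -/
lemma lemma_L (a b y : ℤ) (ha : 0 < a) (hb : 0 < b) (hy : 0 < y)
    (hmod : b ∣ y - a ∨ b ∣ y + a)
    {n m : ℕ} {f g : ℕ → ℤ} (hf : EuclidChain a b n f) (hg : EuclidChain b y m g) :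
    n ≤ m + 2 ∧ ∀ j, 1 ≤ j → j + 2 ≤ n → f (j + 2) ≤ g j := by
  have hfwhole := hf
  obtain ⟨hf0, hf1, hfrec, hfne, hfz⟩ := hf
  obtain ⟨hg0, hg1, hgrec, hgne, hgz⟩ := hg
  -- auxiliary: if b ∣ y then the f-chain is short and everything is trivial
  have short : b ∣ y → n ≤ m + 2 ∧ ∀ j, 1 ≤ j → j + 2 ≤ n → f (j + 2) ≤ g j := by
    intro hdvd
    have hba : b ∣ a := by
      rcases hmod with h | h
      · have := dvd_sub hdvd h
        rwa [show y - (y - a) = a by ring] at this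
      · have := dvd_sub h hdvd
        rwa [show y + a - y = a by ring] at this
    have hn1 : n ≤ 1 := by
      by_contra hcon; push_neg at hcon
      have h2 : f 2 = a % b := by rw [hfrec 0 (by omega), hf0, hf1]
      exact hfne 2 (by omega) (by rw [h2]; exact Int.emod_eq_zero_of_dvd hba)
    exact ⟨by omega, fun j hj1 hj2 => by omega⟩
  rcases lt_trichotomy y b with hyb | hyb | hyb
  · exact lemma_L_small a b y ha hb hy hyb hmod hfwhole ⟨hg0, hg1, hgrec, hgne, hgz⟩
  · exact short ⟨1, by omega⟩
  · -- b < y : here g 2 = b and g 3 = y % b, so g from index 2 is the chain of (b, y % b)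
    have hm1 : 1 ≤ m := by
      by_contra hcon
      have hm0 : m = 0 := by omega
      rw [hm0] at hgz
      have : g 1 = 0 := hgz
      rw [hg1] at this; omega
    have hg2 : g 2 = b := by
      rw [hgrec 0 (by omega), hg0, hg1]
      exact Int.emod_eq_of_lt hb.le hyb
    have hm2 : 2 ≤ m := by
      by_contra hcon
      have hm1' : m = 1 := by omega
      rw [hm1'] at hgz
      have : g 2 = 0 := hgz
      omega
    have hg3 : g 3 = y % b := by rw [hgrec 1 (by omega), hg1, hg2]
    by_cases hz : y % b = 0
    · exact short (Int.dvd_of_emod_eq_zero hz)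
    · have hy' : 0 < y % b := lt_of_le_of_ne (Int.emod_nonneg _ hb.ne') (Ne.symm hz)
      have hy'b : y % b < b := Int.emod_lt_of_pos _ hb
      have hg' : EuclidChain b (y % b) (m - 2) (fun j => g (j + 2)) := by
        refine ⟨hg2, hg3, ?_, ?_, ?_⟩
        · intro i hi
          show g (i + 2 + 2) = g (i + 2) % g (i + 1 + 2)
          rw [show i + 1 + 2 = i + 2 + 1 by omega]
          exact hgrec (i + 2) (by omega)
        · intro i hi
          exact hgne (i + 2) (by omega)
        · show g (m - 2 + 1 + 2) = 0
          rw [show m - 2 + 1 + 2 = m + 1 by omega]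
          exact hgz
      have hdvd' : b ∣ y - y % b := ⟨y / b, by have := Int.mul_ediv_add_emod y b; linarith⟩
      have hmod' : b ∣ y % b - a ∨ b ∣ y % b + a := by
        rcases hmod with h | h
        · left
          have := dvd_sub h hdvd'
          rwa [show y - a - (y - y % b) = y % b - a by ring] at this
        · right
          have := dvd_sub h hdvd'
          rwa [show y + a - (y - y % b) = y % b + a by ring] at this
      obtain ⟨hL1, hL2⟩ := lemma_L_small a b (y % b) ha hb hy' hy'b hmod' hfwhole hg'
      refine ⟨by omega, fun j hj1 hj2 => ?_⟩
      rcases Nat.lt_or_ge j 3 with hj | hj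
      · have hanti := ec_anti ha hb hfwhole 1 (j + 2) (by omega) (by omega) (by omega)
        rw [hf1] at hanti
        interval_cases j
        · rw [hg1]; linarith
        · rw [hg2]; linarith
      · have h1 : f (j - 2 + 2) ≤ g (j - 2 + 2) := hL2 (j - 2) (by omega) (by omega)
        rw [show j - 2 + 2 = j by omega] at h1
        have h2 : f (j + 2) ≤ f j := ec_anti ha hb hfwhole j (j + 2) (by omega) (by omega)
          (by omega)
        exact le_trans h2 h1
    
/-- Main lemma, by induction on `l`. -/
lemma lemma_T : ∀ (l : ℕ) (a b : ℤ), 0 < a → 0 < b → ∀ (k n : ℕ) (q s f : ℕ → ℤ),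
    DivChain a b k q s → EuclidChain a b n f → l ≤ k → 2 * l ≤ n →
    f (2 * l + 1) ≤ |s (l + 1)| := by
  intro l
  induction l with
  | zero =>
    intro a b ha hb k n q s f hchain hf hlk hln
    have h1 : f (2 * 0 + 1) = b := hf.2.1
    have h2 : s (0 + 1) = b := hchain.2.1
    rw [h1, h2, abs_of_pos hb]
  | succ l ih =>
    intro a b ha hb k n q s f hchain hf hlk hln
    obtain ⟨hs0, hs1, hsrec⟩ := hchain
    rcases eq_or_lt_of_le hln with heq | hlt'
    · -- 2 * (l + 1) = n : the bound is f (n + 1) = 0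
      rw [show 2 * (l + 1) + 1 = n + 1 by omega, hf.2.2.2.2]
      exact abs_nonneg _
    have hlt : 2 * l + 3 ≤ n := by omega
    -- first step of the arbitrary chain
    have hx : s 0 = q 0 * s 1 + s 2 := hsrec 0 (by omega)
    have hxval : s 2 = a - q 0 * b := by rw [hs0, hs1] at hx; linarith
    have hxne : s 2 ≠ 0 := by
      intro h0
      have hba : b ∣ a := ⟨q 0, by rw [h0] at hxval; linarith⟩
      have h2 : f 2 = a % b := by rw [hf.2.2.1 0 (by omega), hf.1, hf.2.1]
      exact hf.2.2.2.1 2 (by omega) (by rw [h2]; exact Int.emod_eq_zero_of_dvd hba)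
    set x : ℤ := s 2 with hxdef
    have hy : 0 < |x| := abs_pos.mpr hxne
    -- sign-flipping to make the shifted chain start with (b, |x|)
    set e : ℕ → ℤ := fun i => if i % 2 = 1 ∧ x < 0 then -1 else 1 with he
    have he2 : ∀ i, e (i + 2) = e i := by
      intro i
      simp only [he]
      have : (i + 2) % 2 = i % 2 := by omega
      rw [this]
    have hesq : ∀ i, e i * e i = 1 := by
      intro i
      simp only [he]
      split_ifs <;> norm_num
    have habs : ∀ i, |e i| = 1 := by
      intro i
      simp only [he]
      split_ifs <;> norm_num
    have he0 : e 0 = 1 := by simp [he]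
    have he1x : e 1 * x = |x| := by
      simp only [he]
      rcases lt_or_ge x 0 with h | h
      · rw [if_pos ⟨by norm_num, h⟩, abs_of_neg h]; ring
      · rw [if_neg (by simp; omega), abs_of_nonneg h]; ring
    have hchain' : DivChain b |x| (k - 1) (fun i => e i * e (i + 1) * q (i + 1))
        (fun i => e i * s (i + 1)) := by
      refine ⟨?_, ?_, ?_⟩
      · show e 0 * s 1 = b
        rw [he0, hs1]; ring
      · show e 1 * s 2 = |x|
        exact he1x
      · intro i hi
        have h1 := hsrec (i + 1) (by omega)
        have h2 := hesq (i + 1)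
        show e i * s (i + 1) = e i * e (i + 1) * q (i + 1) * (e (i + 1) * s (i + 1 + 1))
          + e (i + 2) * s (i + 2 + 1)
        rw [he2 i, show i + 1 + 1 = i + 2 by omega, show i + 2 + 1 = i + 3 by omega]
        rw [show i + 1 + 1 = i + 2 by omega, show i + 1 + 2 = i + 3 by omega] at h1
        linear_combination e i * h1 - e i * q (i + 1) * s (i + 2) * h2
    obtain ⟨m, g, hg⟩ := euclid_exists b |x| hb hy
    have hmod : b ∣ |x| - a ∨ b ∣ |x| + a := by
      rcases le_or_gt 0 x with h | h
      · left
        rw [abs_of_nonneg h, hxval]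
        exact ⟨-(q 0), by ring⟩
      · right
        rw [abs_of_neg h, hxval]
        exact ⟨q 0, by ring⟩
    obtain ⟨hL1, hL2⟩ := lemma_L a b |x| ha hb hy hmod hf hg
    have hIH := ih b |x| hb hy (k - 1) m (fun i => e i * e (i + 1) * q (i + 1))
      (fun i => e i * s (i + 1)) g hchain' hg (by omega) (by omega)
    have habs2 : |e (l + 1) * s (l + 1 + 1)| = |s (l + 2)| := by
      rw [abs_mul, habs, one_mul]
    rw [habs2] at hIH
    have hL3 : f (2 * l + 1 + 2) ≤ g (2 * l + 1) := hL2 (2 * l + 1) (by omega) (by omega)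
    have hfin : f (2 * (l + 1) + 1) ≤ g (2 * l + 1) := by
      rw [show 2 * (l + 1) + 1 = 2 * l + 1 + 2 by ring]
      exact hL3
    exact le_trans hfin hIH

/-- An arbitrary division chain decreases at most twice as fast as the Euclidean one:
for `l ≤ min(k, n/2)`, the `l`-th remainder satisfies `|r_l| ≥ f_{2l}`. -/
theorem stmt_15 (a b : ℤ) (ha : 0 < a) (hb : 0 < b) (k n : ℕ)
    (q s : ℕ → ℤ) (hchain : DivChain a b k q s)
    (f : ℕ → ℤ) (hf : EuclidChain a b n f)
    (l : ℕ) (hlk : l ≤ k) (hln : 2 * l ≤ n) :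
    f (2 * l + 1) ≤ |s (l + 1)| := by
  exact lemma_T l a b ha hb k n q s f hchain hf hlk hln
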